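/- arXiv:0911.3765 — 4 statements merged into one kernel-verified Lean document; each statement's English description precedes it below -/
import Mathlib

section
/- For every nonnegative integer n, the n-th derivative of the secant function at x equals sec(x) * Q_n(tan x), where Q_n is the n-th derivative polynomial for secant. -/
noncomputable def Q : ℕ → Polynomial ℝ
  | 0 => 1
  | n + 1 => (1 + Polynomial.X ^ 2) * Polynomial.derivative (Q n)
      + Polynomial.X * Q n

/-!
Since `sec' = sec · tan` and `tan' = 1 + tan²`, the product rule gives
`(sec · p(tan))' = sec · ((1 + X²) p' + X p)(tan)` for every polynomial `p`; this is the
recursion defining `Q`. As `{cos ≠ 0}` is open, the identity for `n` holds near each of its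
points and can be differentiated once more.
-/

open Polynomial Real

lemma hasDerivAt_one_div_cos {x : ℝ} (hx : cos x ≠ 0) :
    HasDerivAt (fun y => 1 / cos y) (1 / cos x * tan x) x := by
  refine ((hasDerivAt_const x (1 : ℝ)).div (hasDerivAt_cos x) hx).congr_deriv ?_
  rw [tan_eq_sin_div_cos]
  field_simp
  ring

lemma hasDerivAt_one_div_cos_mul_eval_tan (p : ℝ[X]) {x : ℝ} (hx : cos x ≠ 0) :
    HasDerivAt (fun y => 1 / cos y * p.eval (tan y))
      (1 / cos x * ((1 + X ^ 2) * derivative p + X * p).eval (tan x)) x := by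
  have hp : HasDerivAt (fun y => p.eval (tan y))
      ((derivative p).eval (tan x) * (1 / cos x ^ 2)) x :=
    (p.hasDerivAt (tan x)).comp x (hasDerivAt_tan hx)
  have hsec_sq : 1 / cos x ^ 2 = 1 + tan x ^ 2 := by
    rw [one_div, ← inv_one_add_tan_sq hx, inv_inv]
  refine ((hasDerivAt_one_div_cos hx).fun_mul hp).congr_deriv ?_
  rw [hsec_sq]
  simp only [eval_add, eval_mul, eval_one, eval_pow, eval_X]
  ring

lemma iteratedDeriv_one_div_cos_eqOn (n : ℕ) :
    Set.EqOn (iteratedDeriv n fun y => 1 / cos y)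
      (fun y => 1 / cos y * (Q n).eval (tan y)) {y | cos y ≠ 0} := by
  induction n with
  | zero => intro y _; simp [Q]
  | succ n ih =>
    intro x hx
    have hopen : IsOpen {y : ℝ | cos y ≠ 0} :=
      isOpen_ne_fun continuous_cos continuous_const
    rw [iteratedDeriv_succ, (Filter.eventuallyEq_of_mem (hopen.mem_nhds hx) ih).deriv_eq]
    exact (hasDerivAt_one_div_cos_mul_eval_tan (Q n) hx).deriv

theorem deriv_sec (n : ℕ) (x : ℝ) (hx : Real.cos x ≠ 0) :
    iteratedDeriv n (fun y : ℝ => 1 / Real.cos y) x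
      = (1 / Real.cos x) * (Q n).eval (Real.tan x) :=
  iteratedDeriv_one_div_cos_eqOn n hx
end

section
/- For every nonnegative integer n, the n-th derivative of the cosecant function at x equals (-1)^n * csc(x) * Q_n(cot x). -/
/-!
Differentiating `csc y * P(cot y)` with `csc' = -csc · cot` and `cot' = -(1 + cot²)` gives
`-csc y * ((1 + X²) P' + X P)(cot y)`, which is exactly the recursion defining `Q`; induction on `n`
finishes, since both sides agree on the open set `{sin ≠ 0}`.
-/

open Polynomial Real Filter Topology

theorem hasDerivAt_cos_div_sin {x : ℝ} (hx : sin x ≠ 0) :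
    HasDerivAt (fun y => cos y / sin y) (-(1 + (cos x / sin x) ^ 2)) x := by
  refine ((hasDerivAt_cos x).div (hasDerivAt_sin x) hx).congr_deriv ?_
  field_simp
  ring

theorem hasDerivAt_one_div_sin {x : ℝ} (hx : sin x ≠ 0) :
    HasDerivAt (fun y => 1 / sin y) (-(1 / sin x * (cos x / sin x))) x := by
  refine ((hasDerivAt_const x 1).div (hasDerivAt_sin x) hx).congr_deriv ?_
  field_simp
  ring

theorem hasDerivAt_const_mul_one_div_sin_mul_eval_cot (c : ℝ) (P : ℝ[X]) {x : ℝ}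
    (hx : sin x ≠ 0) :
    HasDerivAt (fun y => c * (1 / sin y) * P.eval (cos y / sin y))
      (-c * (1 / sin x) * ((1 + X ^ 2) * derivative P + X * P).eval (cos x / sin x)) x := by
  refine (((hasDerivAt_one_div_sin hx).const_mul c).mul
    ((P.hasDerivAt _).comp x (hasDerivAt_cos_div_sin hx))).congr_deriv ?_
  simp only [Function.comp_apply, eval_add, eval_mul, eval_one, eval_pow, eval_X]
  ring

theorem deriv_csc (n : ℕ) (x : ℝ) (hx : Real.sin x ≠ 0) :
    iteratedDeriv n (fun y : ℝ => 1 / Real.sin y) x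
      = (-1 : ℝ) ^ n * (1 / Real.sin x)
        * (Q n).eval (Real.cos x / Real.sin x) := by
  induction n generalizing x with
  | zero => simp [Q]
  | succ n ih =>
    have hopen : IsOpen {y : ℝ | sin y ≠ 0} := isOpen_ne_fun continuous_sin continuous_const
    have heq : iteratedDeriv n (fun y => 1 / sin y)
        =ᶠ[𝓝 x] fun y => (-1 : ℝ) ^ n * (1 / sin y) * (Q n).eval (cos y / sin y) :=
      eventually_of_mem (hopen.mem_nhds hx) ih
    rw [iteratedDeriv_succ, heq.deriv_eq,
      (hasDerivAt_const_mul_one_div_sin_mul_eval_cot _ (Q n) hx).deriv, Q, pow_succ' (-1 : ℝ) n,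
      neg_one_mul]
end

section
/- For every nonnegative integer n, Q_n(x) = Σ_{k=0}^{n} S(n,k) x^k, where S(n,k) are the secant numbers of order k. -/
noncomputable def S (n k : ℕ) : ℝ :=
  iteratedDeriv n (fun t : ℝ => (1 / Real.cos t) * Real.tan t ^ k) 0

/-!
Writing `L p = (1 + X²) p' + X p`, the chain rule gives
`d/dt (sec t · p(tan t)) = sec t · (L p)(tan t)`, so `S(n, k)` is the constant term of `Lⁿ Xᵏ`.
Since `L Xʲ = j Xʲ⁻¹ + (j + 1) Xʲ⁺¹`, the matrix of `L` in the monomial basis is symmetric, hence so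
is that of `Lⁿ`: the constant term of `Lⁿ Xᵏ` is the coefficient of `Xᵏ` in `Lⁿ 1 = Q n`.
-/

open Polynomial Real Set

namespace Polynomial

variable {R : Type*} [CommSemiring R]

variable (R) in
noncomputable def secantOperator : Module.End R R[X] where
  toFun p := (1 + X ^ 2) * derivative p + X * p
  map_add' p q := by simp only [derivative_add, mul_add]; ring
  map_smul' c p := by simp [smul_add]

theorem secantOperator_apply (p : R[X]) :
    secantOperator R p = (1 + X ^ 2) * derivative p + X * p := rfl

theorem coeff_secantOperator (p : R[X]) (j : ℕ) :
    (secantOperator R p).coeff j = (j + 1) * p.coeff (j + 1) + j * p.coeff (j - 1) := by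
  have h : secantOperator R p = derivative p + derivative p * X ^ 2 + p * X ^ 1 := by
    rw [secantOperator_apply]; ring
  rw [h]
  rcases j with _ | _ | j
  · simp [coeff_derivative]
  · simp [coeff_derivative, coeff_mul_X_pow']; ring
  · simp [coeff_derivative, coeff_mul_X_pow']; ring

theorem secantOperator_X_pow (j : ℕ) :
    secantOperator R (X ^ j) = (j : R) • X ^ (j - 1) + ((j : R) + 1) • X ^ (j + 1) := by
  rcases j with _ | j
  · simp [secantOperator_apply]
  · simp only [secantOperator_apply, derivative_X_pow, smul_eq_C_mul, map_add, map_natCast,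
      map_one]
    push_cast
    ring

theorem natDegree_secantOperator_le (p : R[X]) :
    (secantOperator R p).natDegree ≤ p.natDegree + 1 := by
  refine natDegree_le_iff_coeff_eq_zero.mpr fun N hN => ?_
  rw [coeff_secantOperator, coeff_eq_zero_of_natDegree_lt (by omega : p.natDegree < N + 1),
    coeff_eq_zero_of_natDegree_lt (by omega : p.natDegree < N - 1)]
  simp

theorem coeff_secantOperator_pow_X_pow_comm (n j k : ℕ) :
    ((secantOperator R ^ n) (X ^ k)).coeff j = ((secantOperator R ^ n) (X ^ j)).coeff k := by
  induction n generalizing j with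
  | zero => simp [coeff_X_pow, eq_comm]
  | succ n ih =>
    rw [pow_succ', Module.End.mul_apply, coeff_secantOperator, ih, ih, ← pow_succ',
      pow_succ (secantOperator R) n, Module.End.mul_apply, secantOperator_X_pow, map_add,
      map_smul, map_smul, coeff_add, coeff_smul, coeff_smul, smul_eq_mul, smul_eq_mul]
    rcases j with _ | j
    · simp
    · simp only [Nat.add_sub_cancel]; push_cast; ring

end Polynomial

theorem hasDerivAt_inv_cos_mul_eval_tan (p : ℝ[X]) {t : ℝ} (h : cos t ≠ 0) :
    HasDerivAt (fun s => (cos s)⁻¹ * p.eval (tan s))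
      ((cos t)⁻¹ * (secantOperator ℝ p).eval (tan t)) t := by
  have hsec : HasDerivAt (fun s => (cos s)⁻¹) (sin t / cos t ^ 2) t :=
    ((hasDerivAt_cos t).inv h).congr_deriv (by ring)
  have hp : HasDerivAt (fun s => p.eval (tan s))
      ((derivative p).eval (tan t) * (1 / cos t ^ 2)) t :=
    (p.hasDerivAt (tan t)).comp t (hasDerivAt_tan h)
  refine (hsec.mul hp).congr_deriv ?_
  simp only [secantOperator_apply, eval_add, eval_mul, eval_one, eval_pow, eval_X,
    tan_eq_sin_div_cos]
  field_simp
  linear_combination (-(derivative p).eval (sin t / cos t)) * sin_sq_add_cos_sq t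

theorem iteratedDeriv_inv_cos_mul_tan_pow (n k : ℕ) :
    EqOn (iteratedDeriv n fun t => 1 / cos t * tan t ^ k)
      (fun t => (cos t)⁻¹ * ((secantOperator ℝ ^ n) (X ^ k)).eval (tan t))
      (Ioo (-(π / 2)) (π / 2)) := by
  induction n with
  | zero => intro t _; simp
  | succ n ih =>
    intro t ht
    rw [iteratedDeriv_succ, (ih.eventuallyEq_of_mem (isOpen_Ioo.mem_nhds ht)).deriv_eq,
      (hasDerivAt_inv_cos_mul_eval_tan _ (cos_pos_of_mem_Ioo ht).ne').deriv,
      ← Module.End.mul_apply, ← pow_succ']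

theorem S_eq_coeff_zero (n k : ℕ) : S n k = ((secantOperator ℝ ^ n) (X ^ k)).coeff 0 := by
  have h0 : (0 : ℝ) ∈ Ioo (-(π / 2)) (π / 2) := ⟨by linarith [pi_pos], by linarith [pi_pos]⟩
  rw [S, iteratedDeriv_inv_cos_mul_tan_pow n k h0, coeff_zero_eq_eval_zero]
  simp

theorem Q_eq_secantOperator_pow (n : ℕ) : Q n = (secantOperator ℝ ^ n) 1 := by
  induction n with
  | zero => rfl
  | succ n ih => rw [pow_succ', Module.End.mul_apply, ← ih]; rfl

theorem natDegree_Q_le (n : ℕ) : (Q n).natDegree ≤ n := by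
  induction n with
  | zero => simp [Q]
  | succ n ih => exact (natDegree_secantOperator_le (Q n)).trans (by omega)

theorem Q_eq_secant_numbers (n : ℕ) (x : ℝ) :
    (Q n).eval x = ∑ k ∈ Finset.range (n + 1), S n k * x ^ k := by
  rw [eval_eq_sum_range' (Nat.lt_succ_of_le (natDegree_Q_le n))]
  refine Finset.sum_congr rfl fun k _ => ?_
  rw [S_eq_coeff_zero, coeff_secantOperator_pow_X_pow_comm, Q_eq_secantOperator_pow, pow_zero]
end

section
/- For every nonnegative integer n and real x with cos x ≠ 0, the n-th derivative of sec at x equals sec(x) · Σ_{k=0}^{n} S(n,k) tan^k(x). -/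
/-!
Differentiating `sec x * p (tan x)` gives `sec x * (L p) (tan x)` with `L p = (1 + X²) p' + X p`,
so the `n`-th derivative of `sec` is `sec x * (Lⁿ 1) (tan x)`, and `S n k = (Lⁿ Xᵏ) 0` is the
constant coefficient of `Lⁿ Xᵏ`. Since `L Xᵏ = k Xᵏ⁻¹ + (k + 1) Xᵏ⁺¹`, the operator `L` is
symmetric for the inner product making the monomials orthonormal, so the constant coefficient of
`Lⁿ Xᵏ` is the `k`-th coefficient of `Lⁿ 1`, a polynomial of degree at most `n`.
-/

open Polynomial

section Operator

variable {R : Type*} [CommSemiring R]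

variable (R) in
noncomputable def secTanOp : R[X] →ₗ[R] R[X] where
  toFun p := (1 + X ^ 2) * derivative p + X * p
  map_add' p q := by simp only [map_add]; ring
  map_smul' c p := by simp only [derivative_smul, mul_smul_comm, RingHom.id_apply, smul_add]

theorem secTanOp_apply (p : R[X]) :
    secTanOp R p = (1 + X ^ 2) * derivative p + X * p := rfl

theorem coeff_secTanOp (p : R[X]) (k : ℕ) :
    (secTanOp R p).coeff k = k * p.coeff (k - 1) + (k + 1) * p.coeff (k + 1) := by
  rcases k with _ | _ | k
  · simp [secTanOp_apply, add_mul, coeff_derivative, mul_coeff_zero]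
  · simp only [secTanOp_apply, pow_two, add_mul, one_mul, mul_assoc, zero_add, coeff_add,
      coeff_derivative, Nat.reduceAdd, Nat.cast_one, coeff_X_mul, mul_coeff_zero, coeff_X_zero,
      Nat.cast_zero, mul_one, zero_mul, add_zero, tsub_self]
    ring
  · simp only [secTanOp_apply, add_mul, one_mul, coeff_add, coeff_X_pow_mul, coeff_X_mul,
      coeff_derivative, Nat.add_sub_cancel]
    push_cast
    ring

theorem secTanOp_X_pow (k : ℕ) :
    secTanOp R (X ^ k) = (k : R) • X ^ (k - 1) + ((k : R) + 1) • X ^ (k + 1) := by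
  rcases k with _ | k
  · simp [secTanOp_apply]
  · simp only [secTanOp_apply, derivative_X_pow, smul_eq_C_mul, Nat.add_sub_cancel]
    push_cast
    simp only [C_add, C_1, map_natCast]
    ring

theorem natDegree_secTanOp_le (p : R[X]) : (secTanOp R p).natDegree ≤ p.natDegree + 1 := by
  refine natDegree_le_iff_coeff_eq_zero.2 fun k hk => ?_
  rw [coeff_secTanOp, coeff_eq_zero_of_natDegree_lt (by omega : p.natDegree < k - 1),
    coeff_eq_zero_of_natDegree_lt (by omega : p.natDegree < k + 1)]
  simp

theorem natDegree_secTanOp_pow_one_le (n : ℕ) : ((secTanOp R ^ n) 1).natDegree ≤ n := by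
  induction n with
  | zero => simp
  | succ n ih =>
    rw [pow_succ', Module.End.mul_apply]
    exact (natDegree_secTanOp_le _).trans (by omega)

theorem coeff_secTanOp_pow_X_pow_comm (n j k : ℕ) :
    ((secTanOp R ^ n) (X ^ k)).coeff j = ((secTanOp R ^ n) (X ^ j)).coeff k := by
  induction n generalizing k with
  | zero => simp only [pow_zero, Module.End.one_apply, coeff_X_pow, eq_comm]
  | succ n ih =>
    conv_lhs => rw [pow_succ, Module.End.mul_apply]
    conv_rhs => rw [pow_succ', Module.End.mul_apply]
    rw [secTanOp_X_pow, map_add, map_smul, map_smul, coeff_secTanOp, coeff_add, coeff_smul,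
      coeff_smul, smul_eq_mul, smul_eq_mul, ih, ih]

end Operator

theorem hasDerivAt_sec_mul_eval_tan (p : ℝ[X]) {x : ℝ} (hx : Real.cos x ≠ 0) :
    HasDerivAt (fun y => 1 / Real.cos y * p.eval (Real.tan y))
      (1 / Real.cos x * (secTanOp ℝ p).eval (Real.tan x)) x := by
  have hsec : HasDerivAt (fun y => 1 / Real.cos y) (Real.sin x / Real.cos x ^ 2) x := by
    simp only [one_div]
    exact ((Real.hasDerivAt_cos x).inv hx).congr_deriv (by ring)
  have hp : HasDerivAt (fun y => p.eval (Real.tan y))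
      (p.derivative.eval (Real.tan x) * (1 / Real.cos x ^ 2)) x :=
    (p.hasDerivAt (Real.tan x)).comp x (Real.hasDerivAt_tan hx)
  refine (hsec.mul hp).congr_deriv ?_
  have hsec_sq : 1 + Real.tan x ^ 2 = 1 / Real.cos x ^ 2 := by
    rw [one_div, ← Real.inv_one_add_tan_sq hx, inv_inv]
  simp only [secTanOp_apply, eval_add, eval_mul, eval_pow, eval_X, eval_one]
  rw [hsec_sq, Real.tan_eq_sin_div_cos]
  field_simp
  ring

theorem iteratedDeriv_sec_mul_eval_tan (n : ℕ) (p : ℝ[X]) {x : ℝ} (hx : Real.cos x ≠ 0) :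
    iteratedDeriv n (fun y => 1 / Real.cos y * p.eval (Real.tan y)) x
      = 1 / Real.cos x * ((secTanOp ℝ ^ n) p).eval (Real.tan x) := by
  induction n generalizing p x with
  | zero => simp
  | succ n ih =>
    have hderiv : deriv (fun y => 1 / Real.cos y * p.eval (Real.tan y))
        =ᶠ[nhds x] fun y => 1 / Real.cos y * (secTanOp ℝ p).eval (Real.tan y) := by
      filter_upwards [(isOpen_compl_singleton.preimage Real.continuous_cos).mem_nhds hx]
        with y hy
      exact (hasDerivAt_sec_mul_eval_tan p hy).deriv
    rw [iteratedDeriv_succ', hderiv.iteratedDeriv_eq n, ih _ hx, pow_succ, Module.End.mul_apply]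

theorem S_eq_coeff_secTanOp_pow_one (n k : ℕ) : S n k = ((secTanOp ℝ ^ n) 1).coeff k := by
  have h := iteratedDeriv_sec_mul_eval_tan n (X ^ k) (x := 0) (by simp)
  simp only [eval_pow, eval_X, Real.cos_zero, Real.tan_zero, div_one, one_mul] at h
  rw [S, h, ← coeff_zero_eq_eval_zero, coeff_secTanOp_pow_X_pow_comm, pow_zero]

theorem deriv_sec_closed (n : ℕ) (x : ℝ) (hx : Real.cos x ≠ 0) :
    iteratedDeriv n (fun y : ℝ => 1 / Real.cos y) x
      = (1 / Real.cos x) * ∑ k ∈ Finset.range (n + 1), S n k * Real.tan x ^ k := by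
  have h := iteratedDeriv_sec_mul_eval_tan n 1 hx
  simp only [eval_one, mul_one] at h
  rw [h, eval_eq_sum_range' (Nat.lt_succ_of_le (natDegree_secTanOp_pow_one_le n))]
  simp only [S_eq_coeff_secTanOp_pow_one]
end
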